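/- arXiv:1708.00686 — 8 statements merged into one kernel-verified Lean document; each statement's English description precedes it below -/
import Mathlib

section
/- Let p be an odd prime and f_d(x) = x^d on 𝔽_{p^n}. If the equation ∑_{i=0}^{p-1} f_d(x + i·a) = b has a solution x₀ for some a ∈ 𝔽_{p^n}ˣ and d is even, then every element of (x₀ + a·𝔽_p) ∪ (−x₀ + a·𝔽_p) is also a solution of this equation. -/
open scoped BigOperators

lemma sum_range_to_zmod {p : ℕ} [Fact p.Prime] {M : Type*} [AddCommMonoid M]
    (f : ZMod p → M) :
    ∑ i ∈ Finset.range p, f (i : ZMod p) = ∑ j : ZMod p, f j := by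
  have : NeZero p := ⟨(Fact.out : p.Prime).ne_zero⟩
  refine Finset.sum_nbij' (fun i => (i : ZMod p)) (fun j => j.val) ?_ ?_ ?_ ?_ ?_
  · intros; exact Finset.mem_univ _
  · intro j _; exact Finset.mem_range.mpr (ZMod.val_lt j)
  · intro i hi; exact ZMod.val_natCast_of_lt (Finset.mem_range.mp hi)
  · intro j _; exact ZMod.natCast_rightInverse j
  · intros; rfl

lemma sum_as_zmod {p n : ℕ} [Fact p.Prime] (d : ℕ) (a x : GaloisField p n) :
    ∑ i ∈ Finset.range p, (x + i • a) ^ d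
      = ∑ j : ZMod p, (x + algebraMap (ZMod p) (GaloisField p n) j * a) ^ d := by
  rw [← sum_range_to_zmod (fun j => (x + algebraMap (ZMod p) (GaloisField p n) j * a) ^ d)]
  refine Finset.sum_congr rfl fun i _ => ?_
  rw [map_natCast, nsmul_eq_mul]

theorem stmt_1 (p n d : ℕ) [Fact p.Prime] (hp : Odd p) (hn : 0 < n)
    (hd : Even d) (hd0 : 0 < d)
    (a : GaloisField p n) (ha : a ≠ 0) (x₀ b : GaloisField p n)
    (hsol : ∑ i ∈ Finset.range p, (x₀ + i • a) ^ d = b) :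
    ∀ y : GaloisField p n,
      (∃ c : ZMod p, y = x₀ + algebraMap (ZMod p) (GaloisField p n) c * a ∨
                     y = -x₀ + algebraMap (ZMod p) (GaloisField p n) c * a) →
      ∑ i ∈ Finset.range p, (y + i • a) ^ d = b := by
  have hshift : ∀ (x : GaloisField p n) (c : ZMod p),
      ∑ j : ZMod p, (x + algebraMap (ZMod p) (GaloisField p n) c * a + algebraMap (ZMod p) (GaloisField p n) j * a) ^ d = ∑ j : ZMod p, (x + algebraMap (ZMod p) (GaloisField p n) j * a) ^ d := by
    intro x c
    rw [← Equiv.sum_comp (Equiv.addLeft c) (fun j => (x + algebraMap (ZMod p) (GaloisField p n) j * a) ^ d)]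
    refine Finset.sum_congr rfl fun j _ => ?_
    simp only [Equiv.coe_addLeft, map_add]
    ring_nf
  have hneg : ∀ x : GaloisField p n,
      ∑ j : ZMod p, (-x + algebraMap (ZMod p) (GaloisField p n) j * a) ^ d = ∑ j : ZMod p, (x + algebraMap (ZMod p) (GaloisField p n) j * a) ^ d := by
    intro x
    rw [← Equiv.sum_comp (Equiv.neg (ZMod p)) (fun j => (x + algebraMap (ZMod p) (GaloisField p n) j * a) ^ d)]
    refine Finset.sum_congr rfl fun j _ => ?_
    simp only [Equiv.neg_apply, map_neg]
    rw [show x + -algebraMap (ZMod p) (GaloisField p n) j * a = -(-x + algebraMap (ZMod p) (GaloisField p n) j * a) by ring, hd.neg_pow]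
  rintro y ⟨c, hc | hc⟩ <;> subst hc <;>
    rw [sum_as_zmod, ← hsol, sum_as_zmod]
  · exact hshift x₀ c
  · rw [hshift (-x₀) c, hneg]
end

section
/- Let p be a prime and d = 1 + p^{i_2} + ⋯ + p^{i_p} with 0 ≤ i_2 ≤ ⋯ ≤ i_p and (i_2,…,i_p) ≠ (0,…,0). Then f_d(x) = x^d is a GAPN function on 𝔽_{p^n} if and only if the kernel of the 𝔽_p-linear map φ_d(x) = x + x^{p^{i_2}} + ⋯ + x^{p^{i_p}} on 𝔽_{p^n} equals the prime subfield 𝔽_p. -/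
open scoped BigOperators

/-- `f` is a generalized almost perfect nonlinear (GAPN) function on `F`. -/
def IsGAPN (p : ℕ) {F : Type*} [Field F] (f : F → F) : Prop :=
  ∀ a : F, a ≠ 0 → ∀ b : F,
    {x : F | ∑ i ∈ Finset.range p, f (x + i • a) = b}.ncard ≤ p

/-!
Put `x = a y`. Since `(y + k)^(p^m) = y^(p^m) + k` for `k ∈ 𝔽_p`, the sum
`∑_{k ∈ 𝔽_p} (x + k a)^d` equals `a^d ∑_k ∏_{s} (w_s + k)` for the `p` values
`w = (y, y^(p^{i_2}), …, y^(p^{i_p}))`. Expanding the product by Vieta, the power sums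
`∑_k k^e` vanish for `e < p - 1` and equal `-1` for `e = p - 1`, so only
`a^d (C - φ_d(y))` survives, with the constant `C = ∑_k k^p`. Hence every solution set in the
GAPN condition is a dilate of a fibre of the additive map `φ_d`, i.e. empty or a coset of
`ker φ_d ⊇ 𝔽_p`. So `f_d` is GAPN iff `|ker φ_d| ≤ p` iff `ker φ_d = 𝔽_p`.
-/

open Finset

@[simp]
theorem Multiset.esymm_zero {R : Type*} [CommSemiring R] (s : Multiset R) : s.esymm 0 = 1 := by
  simp [Multiset.esymm]

@[simp]
theorem Multiset.esymm_one {R : Type*} [CommSemiring R] (s : Multiset R) : s.esymm 1 = s.sum := by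
  simp [Multiset.esymm, Multiset.powersetCard_one]

theorem Multiset.prod_map_add_eq_sum_esymm {R : Type*} [CommSemiring R] (s : Multiset R) (x : R) :
    (s.map (· + x)).prod =
      ∑ j ∈ Finset.range (Multiset.card s + 1), s.esymm j * x ^ (Multiset.card s - j) := by
  simpa [Polynomial.eval_multiset_prod, add_comm, Polynomial.eval_finsetSum] using
    congrArg (Polynomial.eval x) (Multiset.prod_X_add_C_eq_sum_esymm s)

theorem AddMonoidHom.ncard_preimage_singleton_le {G H : Type*} [AddGroup G] [Finite G]
    [AddGroup H] (f : G →+ H) (c : H) : (f ⁻¹' {c}).ncard ≤ (f ⁻¹' {0}).ncard := by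
  rcases (f ⁻¹' {c}).eq_empty_or_nonempty with hempty | ⟨y, hy⟩
  · simp [hempty]
  refine Set.ncard_le_ncard_of_injOn (· - y) (fun x hx => ?_) sub_left_injective.injOn
    (Set.toFinite _)
  simp_all

section PowerSums

variable {R : Type*} [CommRing R] (p : ℕ) [Fact p.Prime] [CharP R p]

theorem natCast_pow_prime_pow (k m : ℕ) : (k : R) ^ p ^ m = k :=
  map_natCast (iterateFrobenius R p m) k

theorem sum_range_natCast_pow (e : ℕ) :
    ∑ k ∈ range p, (k : R) ^ e = ZMod.castHom (dvd_refl p) R (∑ x : ZMod p, x ^ e) := by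
  have : NeZero p := ⟨(Fact.out : p.Prime).ne_zero⟩
  rw [map_sum]
  refine (sum_nbij' (fun x : ZMod p => x.val) (fun k => (k : ZMod p)) ?_ ?_ ?_ ?_ ?_).symm
    <;> intro x hx
  all_goals simp_all [ZMod.val_lt, Nat.mod_eq_of_lt]

theorem sum_range_natCast_pow_of_lt_sub_one {e : ℕ} (he : e < p - 1) :
    ∑ k ∈ range p, (k : R) ^ e = 0 := by
  rw [sum_range_natCast_pow, FiniteField.sum_pow_lt_card_sub_one _ _ (by rwa [ZMod.card]),
    map_zero]

theorem sum_range_natCast_pow_sub_one : ∑ k ∈ range p, (k : R) ^ (p - 1) = -1 := by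
  classical
  have hp := (Fact.out : p.Prime).one_lt
  have hpow (x : ZMod p) : x ^ (p - 1) = if x ≠ 0 then 1 else 0 := by
    split_ifs with hx
    · exact ZMod.pow_card_sub_one_eq_one hx
    · rw [not_not.1 hx, zero_pow (by omega)]
  simp only [sum_range_natCast_pow, hpow, sum_boole, filter_ne', mem_univ, card_erase_of_mem,
    card_univ, ZMod.card]
  simp [Nat.cast_sub hp.le]

theorem sum_range_multiset_prod_add_natCast (s : Multiset R) (hs : Multiset.card s = p) :
    ∑ k ∈ range p, (s.map (· + (k : R))).prod = ∑ k ∈ range p, (k : R) ^ p - s.sum := by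
  obtain ⟨m, rfl⟩ : ∃ m, p = m + 1 := ⟨p - 1, by have := (Fact.out : p.Prime).pos; omega⟩
  have hS : ∑ k ∈ range (m + 1), (k : R) ^ m = -1 := by
    simpa using sum_range_natCast_pow_sub_one (R := R) (m + 1)
  simp_rw [Multiset.prod_map_add_eq_sum_esymm, hs]
  rw [sum_comm]
  simp_rw [← mul_sum]
  -- only the coefficients `esymm 0 = 1` and `esymm 1 = s.sum` meet a nonvanishing power sum
  rw [sum_range_succ', sum_range_succ', sum_eq_zero fun j hj => ?_]
  · simp only [Multiset.esymm_zero, Multiset.esymm_one, zero_add, Nat.sub_zero,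
      add_tsub_cancel_right, hS]
    ring
  · rw [sum_range_natCast_pow_of_lt_sub_one (m + 1) (by simp at hj; omega), mul_zero]

end PowerSums

section FrobeniusSum

variable {R : Type*} [CommRing R] (p : ℕ) {ι : Type*} [Fintype ι]

/-- The linearized map `φ_d` attached to `d = 1 + ∑ j, p ^ e j`. -/
def frobeniusSum [ExpChar R p] (e : ι → ℕ) : R →+ R :=
  AddMonoidHom.id R + ∑ j, (iterateFrobenius R p (e j)).toAddMonoidHom

theorem frobeniusSum_apply [ExpChar R p] (e : ι → ℕ) (x : R) :
    frobeniusSum p e x = x + ∑ j, x ^ p ^ e j := by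
  simp [frobeniusSum, iterateFrobenius_def]

variable [Fact p.Prime] {e : ι → ℕ}

theorem frobeniusSum_algebraMap [CharP R p] [Algebra (ZMod p) R]
    (hι : Fintype.card ι = p - 1) (c : ZMod p) :
    frobeniusSum p e (algebraMap (ZMod p) R c) = 0 := by
  have hfix (m : ℕ) : algebraMap (ZMod p) R c ^ p ^ m = algebraMap (ZMod p) R c := by
    rw [← map_pow, ZMod.pow_card_pow]
  simp only [frobeniusSum_apply, hfix, sum_const, card_univ, hι]
  rw [← succ_nsmul', Nat.sub_add_cancel (Fact.out : p.Prime).one_le, ← map_nsmul, nsmul_eq_mul,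
    CharP.cast_eq_zero, zero_mul, map_zero]

theorem sum_range_add_natCast_pow [CharP R p] (hι : Fintype.card ι = p - 1) (y : R) :
    ∑ k ∈ range p, (y + k) ^ (1 + ∑ j, p ^ e j) =
      ∑ k ∈ range p, (k : R) ^ p - frobeniusSum p e y := by
  have hprod (k : ℕ) : (y + k) ^ (1 + ∑ j, p ^ e j) =
      ((y ::ₘ univ.val.map fun j => y ^ p ^ e j).map (· + (k : R))).prod := by
    rw [Multiset.map_cons, Multiset.prod_cons, Multiset.map_map, prod_map_val, pow_add, pow_one,
      ← prod_pow_eq_pow_sum]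
    simp only [Function.comp_apply, add_pow_char_pow, natCast_pow_prime_pow]
  have hcard : Multiset.card (y ::ₘ univ.val.map fun j => y ^ p ^ e j) = p := by
    have := (Fact.out : p.Prime).one_le
    simp only [Multiset.card_cons, Multiset.card_map, card_val, card_univ, hι]
    omega
  simp_rw [hprod]
  rw [sum_range_multiset_prod_add_natCast p _ hcard, frobeniusSum_apply]
  simp

variable {F : Type*} [Field F] [CharP F p]

theorem sum_range_add_nsmul_pow (hι : Fintype.card ι = p - 1) {a : F} (ha : a ≠ 0) (x : F) :
    ∑ k ∈ range p, (x + k • a) ^ (1 + ∑ j, p ^ e j) =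
      a ^ (1 + ∑ j, p ^ e j) * (∑ k ∈ range p, (k : F) ^ p - frobeniusSum p e (x / a)) := by
  have hshift (k : ℕ) : x + k • a = a * (x / a + k) := by
    rw [nsmul_eq_mul, mul_add, mul_div_cancel₀ _ ha, mul_comm]
  simp_rw [hshift, mul_pow, ← mul_sum, sum_range_add_natCast_pow p hι]

theorem ncard_setOf_sum_range_add_nsmul_pow_eq (hι : Fintype.card ι = p - 1) {a : F}
    (ha : a ≠ 0) (b : F) :
    {x : F | ∑ k ∈ range p, (x + k • a) ^ (1 + ∑ j, p ^ e j) = b}.ncard =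
      (frobeniusSum p e ⁻¹' {∑ k ∈ range p, (k : F) ^ p - b / a ^ (1 + ∑ j, p ^ e j)}).ncard := by
  have had : a ^ (1 + ∑ j, p ^ e j) ≠ 0 := pow_ne_zero _ ha
  have hset : {x : F | ∑ k ∈ range p, (x + k • a) ^ (1 + ∑ j, p ^ e j) = b} =
      (· / a) ⁻¹'
        (frobeniusSum p e ⁻¹' {∑ k ∈ range p, (k : F) ^ p - b / a ^ (1 + ∑ j, p ^ e j)}) := by
    ext x
    rw [Set.mem_preimage, Set.mem_preimage, Set.mem_singleton_iff, eq_sub_iff_add_eq,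
      ← eq_sub_iff_add_eq', div_eq_iff had, eq_comm, mul_comm, Set.mem_ofPred_eq,
      sum_range_add_nsmul_pow p hι ha]
  rw [hset, Set.ncard_preimage_of_injective_subset_range (f := (· / a))
    (Equiv.divRight₀ a ha).injective (fun y _ => ⟨y * a, mul_div_cancel_right₀ y ha⟩)]

variable [Finite F]

theorem isGAPN_pow_iff_ncard_le (hι : Fintype.card ι = p - 1) :
    IsGAPN p (fun x : F => x ^ (1 + ∑ j, p ^ e j)) ↔
      (frobeniusSum p e ⁻¹' ({0} : Set F)).ncard ≤ p := by
  refine ⟨fun h => ?_, fun h a ha b => ?_⟩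
  · have h1 := h 1 one_ne_zero (∑ k ∈ range p, (k : F) ^ p)
    beta_reduce at h1
    rwa [ncard_setOf_sum_range_add_nsmul_pow_eq p hι one_ne_zero, one_pow, div_one,
      sub_self] at h1
  · rw [ncard_setOf_sum_range_add_nsmul_pow_eq p hι ha]
    exact (AddMonoidHom.ncard_preimage_singleton_le _ _).trans h

theorem isGAPN_pow_iff_frobeniusSum_preimage_zero_eq_range [Algebra (ZMod p) F]
    (hι : Fintype.card ι = p - 1) :
    IsGAPN p (fun x : F => x ^ (1 + ∑ j, p ^ e j)) ↔
      frobeniusSum p e ⁻¹' {0} = Set.range (algebraMap (ZMod p) F) := by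
  have hsub : Set.range (algebraMap (ZMod p) F) ⊆ frobeniusSum p e ⁻¹' {0} := by
    rintro _ ⟨c, rfl⟩
    exact frobeniusSum_algebraMap p hι c
  have hcard : (Set.range (algebraMap (ZMod p) F)).ncard = p := by
    rw [Set.ncard_range_of_injective (algebraMap (ZMod p) F).injective, Nat.card_zmod]
  rw [isGAPN_pow_iff_ncard_le p hι]
  exact ⟨fun h => (Set.eq_of_subset_of_ncard_le hsub (h.trans hcard.ge)).symm,
    fun h => h ▸ hcard.le⟩

end FrobeniusSum

theorem stmt_3_general (p n : ℕ) [Fact p.Prime]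
    (i : Fin (p - 1) → ℕ)
    (d : ℕ) (hd : d = 1 + ∑ j, p ^ i j) :
    IsGAPN p (fun x : GaloisField p n => x ^ d) ↔
      {x : GaloisField p n | x + ∑ j, x ^ p ^ i j = 0} =
        Set.range (algebraMap (ZMod p) (GaloisField p n)) := by
  have hker : {x : GaloisField p n | x + ∑ j, x ^ p ^ i j = 0} = frobeniusSum p i ⁻¹' {0} := by
    ext x
    simp [frobeniusSum_apply]
  rw [hd, hker]
  exact isGAPN_pow_iff_frobeniusSum_preimage_zero_eq_range p (Fintype.card_fin _)

theorem stmt_3 (p n : ℕ) [Fact p.Prime] (hn : 0 < n)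
    (i : Fin (p - 1) → ℕ) (hmono : Monotone i) (hne : ∃ j, i j ≠ 0)
    (d : ℕ) (hd : d = 1 + ∑ j, p ^ i j) :
    IsGAPN p (fun x : GaloisField p n => x ^ d) ↔
      {x : GaloisField p n | x + ∑ j, x ^ p ^ i j = 0} =
        Set.range (algebraMap (ZMod p) (GaloisField p n)) :=
  stmt_3_general p n i d hd
end

section
/- Let p be an odd prime, n ≥ 2, and set t = (n−1)/2 if n is odd and t = n/2 if n is even. Let d = p^t + p + 1. If p ≥ 5, then f_d(x) = x^d is not a GAPN function on 𝔽_{p^n}. -/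
open scoped BigOperators

section Aux

variable (p : ℕ) [Fact p.Prime] {F : Type*} [Field F] [Algebra (ZMod p) F]

lemma sum_range_pow_zmod (k : ℕ) :
    ∑ i ∈ Finset.range p, ((i : ZMod p)) ^ k = ∑ x : ZMod p, x ^ k := by
  refine Finset.sum_nbij' (fun i => (i : ZMod p)) (fun x => x.val) ?_ ?_ ?_ ?_ ?_
  · intro i _; exact Finset.mem_univ _
  · intro x _; exact Finset.mem_range.mpr (ZMod.val_lt x)
  · intro i hi; exact ZMod.val_cast_of_lt (Finset.mem_range.mp hi)
  · intro x _; exact ZMod.natCast_rightInverse x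
  · intro i _; rfl

lemma sum_range_pow_zero (k : ℕ) (hk : k < p - 1) :
    ∑ i ∈ Finset.range p, ((i : F)) ^ k = 0 := by
  have h : ∑ x : ZMod p, x ^ k = 0 := by
    have := FiniteField.sum_pow_lt_card_sub_one (K := ZMod p) k
      (by rwa [ZMod.card])
    exact this
  have := congrArg (algebraMap (ZMod p) F) (((sum_range_pow_zmod p k).trans h))
  simpa [map_sum] using this

lemma natCast_pow_pow (t : ℕ) (i : ℕ) : ((i : F)) ^ p ^ t = (i : F) := by
  have h : ((i : F)) = algebraMap (ZMod p) F (i : ZMod p) := by simp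
  rw [h, ← map_pow, ZMod.pow_card_pow]

end Aux

lemma sum_shift (p n t : ℕ) [Fact p.Prime] (hp5 : 5 ≤ p) (x a : GaloisField p n) :
    ∑ i ∈ Finset.range p, (x + i • a) ^ (p ^ t + p + 1) = 0 := by
  have key : ∀ i ∈ Finset.range p, (x + i • a) ^ (p ^ t + p + 1) =
      (x ^ (p ^ t) * x ^ p * x)
      + (x ^ (p ^ t) * x ^ p * a + x ^ (p ^ t) * a ^ p * x + a ^ (p ^ t) * x ^ p * x) * (i : GaloisField p n)
      + (x ^ (p ^ t) * a ^ p * a + a ^ (p ^ t) * x ^ p * a + a ^ (p ^ t) * a ^ p * x) * (i : GaloisField p n) ^ 2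
      + (a ^ (p ^ t) * a ^ p * a) * (i : GaloisField p n) ^ 3 := by
    intro i _
    have h1 : (x + i • a) ^ (p ^ t + p + 1)
        = (x + (i : GaloisField p n) * a) ^ (p ^ t) * (x + (i : GaloisField p n) * a) ^ p * (x + (i : GaloisField p n) * a) := by
      rw [nsmul_eq_mul, pow_add, pow_add, pow_one]
    have h2 : (x + (i : GaloisField p n) * a) ^ (p ^ t) = x ^ (p ^ t) + (i : GaloisField p n) * a ^ (p ^ t) := by
      rw [add_pow_char_pow, mul_pow, natCast_pow_pow]
    have h3 : (x + (i : GaloisField p n) * a) ^ p = x ^ p + (i : GaloisField p n) * a ^ p := by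
      have hip : ((i : GaloisField p n)) ^ p = (i : GaloisField p n) := by
        have := natCast_pow_pow p (F := GaloisField p n) 1 i
        rwa [pow_one] at this
      rw [add_pow_char, mul_pow, hip]
    rw [h1, h2, h3]; ring
  rw [Finset.sum_congr rfl key]
  have hz : ∀ k, k < p - 1 → ∑ i ∈ Finset.range p, ((i : GaloisField p n)) ^ k = 0 :=
    fun k hk => sum_range_pow_zero p k hk
  have h1 : ∑ i ∈ Finset.range p, ((i : GaloisField p n)) = 0 := by
    have := hz 1 (by omega); simpa using this
  have h2 : ∑ i ∈ Finset.range p, ((i : GaloisField p n)) ^ 2 = 0 := hz 2 (by omega)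
  have h3 : ∑ i ∈ Finset.range p, ((i : GaloisField p n)) ^ 3 = 0 := hz 3 (by omega)
  simp only [Finset.sum_add_distrib, ← Finset.mul_sum]
  rw [h1, h2, h3, Finset.sum_const, Finset.card_range, nsmul_eq_mul,
    CharP.cast_eq_zero (GaloisField p n) p]
  ring

theorem stmt_7 (p n t : ℕ) [Fact p.Prime] (hp : Odd p) (hn : 2 ≤ n)
    (ht : t = if Odd n then (n - 1) / 2 else n / 2) (hp5 : 5 ≤ p) :
    ¬ IsGAPN p (fun x : GaloisField p n => x ^ (p ^ t + p + 1)) := by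
  intro h
  have hb := h 1 one_ne_zero 0
  have hset : {x : GaloisField p n |
      ∑ i ∈ Finset.range p, (x + i • (1 : GaloisField p n)) ^ (p ^ t + p + 1) = 0}
      = Set.univ := by
    ext x
    simp only [Set.mem_setOf_eq, Set.mem_univ, iff_true]
    have := sum_shift p n t hp5 x 1
    simpa using this
  simp only [hset] at hb
  rw [Set.ncard_univ, GaloisField.card p n (by omega)] at hb
  have : p < p ^ n := by
    calc p = p ^ 1 := (pow_one p).symm
    _ < p ^ n := Nat.pow_lt_pow_right (by omega) (by omega)
  omega
end

section
/- Let p = 3 and n ≥ 2, with t = (n−1)/2 if n is odd and t = n/2 if n is even. Then for every β in the algebraic closure of 𝔽_3 with β^n = 1 and β ≠ 1, we have 1 + β + β^t ≠ 0. -/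
theorem stmt_8 (n t : ℕ) (hn : 2 ≤ n)
    (ht : t = if Odd n then (n - 1) / 2 else n / 2)
    (β : AlgebraicClosure (ZMod 3)) (hβn : β ^ n = 1) (hβ1 : β ≠ 1) :
    1 + β + β ^ t ≠ 0 := by
  have h3 : (3 : AlgebraicClosure (ZMod 3)) = 0 := by
    exact_mod_cast CharP.cast_eq_zero (AlgebraicClosure (ZMod 3)) 3
  intro h
  by_cases hodd : Odd n
  · -- n odd, t = (n-1)/2, n = 2t+1
    rw [if_pos hodd] at ht
    obtain ⟨k, hk⟩ := hodd
    have hnk : n = 2 * t + 1 := by omega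
    subst hnk
    have hbt : β ^ t = -(1 + β) := by linear_combination h
    have key : β * (1 + β) ^ 2 = 1 := by
      have h2 : β ^ (2 * t + 1) = β * (β ^ t) ^ 2 := by ring
      rw [hβn, hbt] at h2
      linear_combination -h2
    have hfac : (β ^ 2 + 1) * (β - 1) = 0 := by
      linear_combination key - β ^ 2 * h3
    have hβ2 : β ^ 2 = -1 := by
      rcases mul_eq_zero.mp hfac with h1 | h2
      · linear_combination h1
      · exact absurd (by linear_combination h2) hβ1
    have hpow : β * (-1 : AlgebraicClosure (ZMod 3)) ^ t = 1 := by
      have h2 : β ^ (2 * t + 1) = β * (β ^ 2) ^ t := by ring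
      rw [hβn, hβ2] at h2
      linear_combination -h2
    rcases Nat.even_or_odd t with he | ho
    · rw [he.neg_one_pow] at hpow
      exact hβ1 (by linear_combination hpow)
    · rw [ho.neg_one_pow] at hpow
      have hβm1 : β = -1 := by linear_combination -hpow
      rw [hβm1] at hβ2
      exact one_ne_zero (by linear_combination h3 - hβ2 : (1 : AlgebraicClosure (ZMod 3)) = 0)
  · -- n even, t = n/2
    rw [if_neg hodd] at ht
    have hne : Even n := Nat.not_odd_iff_even.mp hodd
    obtain ⟨k, hk⟩ := hne
    have hnk : n = 2 * t := by omega
    subst hnk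
    have hsq : (β ^ t - 1) * (β ^ t + 1) = 0 := by
      have h2 : β ^ (2 * t) = (β ^ t) ^ 2 := by ring
      rw [hβn] at h2
      linear_combination -h2
    rcases mul_eq_zero.mp hsq with h1 | h2
    · have hb : β ^ t = 1 := by linear_combination h1
      rw [hb] at h
      exact hβ1 (by linear_combination h - h3)
    · have hb : β ^ t = -1 := by linear_combination h2
      rw [hb] at h
      have hβ0 : β = 0 := by linear_combination h
      rw [hβ0] at hβn
      rw [zero_pow (by omega : 2 * t ≠ 0)] at hβn
      exact one_ne_zero hβn.symm
end

section
/- Let p = 3, n ≥ 2, with t = (n−1)/2 if n is odd and t = n/2 if n is even, and d = 3^t + 3 + 1 = 3^t + 4. Then f_d(x) = x^d is a GAPN function on 𝔽_{3^n}. -/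
open scoped BigOperators

/-! With `q = 3 ^ t` and `f x = x ^ (q + 4)`, in characteristic 3 the sum
`f x + f (x + a) + f (x - a)` equals `-(a⁴ x^q + a^(q+1) x³ + a^(q+3) x)`, which is additive in `x`.
So each fibre is a coset `x₀ + a • Z` with `Z = {z | z^q + z³ + z = 0}`. Raising the equation
of `Z` to the `q`-th power gives `z^(q²) = z⁹ - z³ + z`; since `q² = 3^n` or `3 q² = 3^n`, this
forces `z³ = z` (for odd `n` through `z^(3⁴) = z` and `gcd 4 n = 1`), i.e. `Z ⊆ 𝔽₃`, and every
fibre lies in `{x₀, x₀ + a, x₀ - a}`. -/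

open Function

lemma eq_zero_or_eq_one_or_eq_neg_one_of_pow_three_eq_self {K : Type*} [CommRing K]
    [NoZeroDivisors K] {z : K} (hz : z ^ 3 = z) : z = 0 ∨ z = 1 ∨ z = -1 := by
  have : z * ((z - 1) * (z + 1)) = 0 := by linear_combination hz
  simp only [mul_eq_zero, sub_eq_zero, ← eq_neg_iff_add_eq_zero] at this
  exact this

section CharThree

variable {R : Type*} [CommRing R] [CharP R 3]

lemma sum_range_three_add_nsmul (f : R → R) (x a : R) :
    ∑ i ∈ Finset.range 3, f (x + i • a) = f x + f (x + a) + f (x - a) := by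
  have h3 : (3 : R) = 0 := CharP.cast_eq_zero R 3
  have h2 : x + 2 • a = x - a := by linear_combination a * h3
  simp only [Finset.sum_range_succ, Finset.sum_range_zero, zero_nsmul, one_nsmul, h2, add_zero,
    zero_add]

lemma pow_three_pow_add_four_add_add_sub (t : ℕ) (x a : R) :
    x ^ (3 ^ t + 4) + (x + a) ^ (3 ^ t + 4) + (x - a) ^ (3 ^ t + 4) =
      -(a ^ 4 * x ^ 3 ^ t + a ^ (3 ^ t + 1) * x ^ 3 + a ^ (3 ^ t + 3) * x) := by
  have h3 : (3 : R) = 0 := CharP.cast_eq_zero R 3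
  rw [pow_add, pow_add, pow_add, add_pow_char_pow, sub_pow_char_pow]
  linear_combination (x ^ 3 ^ t * (x ^ 4 + 4 * x ^ 2 * a ^ 2 + a ^ 4)
    + 3 * a ^ 3 ^ t * (x ^ 3 * a + x * a ^ 3)) * h3

lemma sum_range_three_pow_three_pow_add_four_add_mul (t : ℕ) (y a z : R) :
    ∑ i ∈ Finset.range 3, (y + a * z + i • a) ^ (3 ^ t + 4) =
      ∑ i ∈ Finset.range 3, (y + i • a) ^ (3 ^ t + 4) -
        a ^ (3 ^ t + 4) * (z ^ 3 ^ t + z ^ 3 + z) := by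
  simp only [sum_range_three_add_nsmul (· ^ (3 ^ t + 4)), pow_three_pow_add_four_add_add_sub,
    add_pow_char_pow, add_pow_char, mul_pow]
  ring

end CharThree

section CharThreeField

variable {F : Type*} [Field F] [CharP F 3]

lemma pow_three_pow_two_mul_of_root {t : ℕ} {z : F} (hz : z ^ 3 ^ t + z ^ 3 + z = 0) :
    z ^ 3 ^ (2 * t) = z ^ 9 - z ^ 3 + z := by
  have h3 : (3 : F) = 0 := CharP.cast_eq_zero F 3
  have hzt : z ^ 3 ^ t = -(z ^ 3) - z := by linear_combination hz
  calc z ^ 3 ^ (2 * t) = iterateFrobenius F 3 t (-(z ^ 3) - z) := by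
        rw [iterateFrobenius_def, ← hzt, ← pow_mul, ← pow_add, two_mul]
    _ = -((z ^ 3 ^ t) ^ 3) - z ^ 3 ^ t := by
        simp only [map_sub, map_neg, map_pow, iterateFrobenius_def]
    _ = z ^ 9 - z ^ 3 + z := by rw [hzt]; linear_combination (z ^ 3 + z ^ 5 + z ^ 7) * h3

lemma pow_three_eq_self_of_root {n t : ℕ} (hnt : n = 2 * t ∨ n = 2 * t + 1) {z : F}
    (hzn : z ^ 3 ^ n = z) (hz : z ^ 3 ^ t + z ^ 3 + z = 0) : z ^ 3 = z := by
  have h2t := pow_three_pow_two_mul_of_root hz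
  rcases hnt with rfl | rfl
  · apply frobenius_inj F 3
    simp only [frobenius_def]
    linear_combination h2t.symm.trans hzn
  · have hφ : frobenius F 3 (z ^ 9 - z ^ 3 + z) = z := by
      rw [← h2t, frobenius_def, ← pow_mul, ← pow_succ, hzn]
    have hφφ := congrArg (frobenius F 3) hφ
    simp only [map_add, map_sub, frobenius_def] at hφ hφφ
    have hper4 : IsPeriodicPt (frobenius F 3) 4 z := by
      rw [IsPeriodicPt, IsFixedPt, iterate_frobenius]
      linear_combination hφ + hφφ
    have hper : IsPeriodicPt (frobenius F 3) (2 * t + 1) z := by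
      rwa [IsPeriodicPt, IsFixedPt, iterate_frobenius]
    have hcop : Nat.Coprime 4 (2 * t + 1) :=
      Nat.Coprime.pow_left 2 (Nat.coprime_two_left.mpr (odd_two_mul_add_one t))
    simpa [hcop.gcd_eq_one, IsPeriodicPt, IsFixedPt, frobenius_def] using hper4.gcd hper

lemma isGAPN_pow_three_pow_add_four {t : ℕ}
    (hroots : ∀ z : F, z ^ 3 ^ t + z ^ 3 + z = 0 → z ^ 3 = z) :
    IsGAPN 3 (fun x : F => x ^ (3 ^ t + 4)) := by
  classical
  intro a ha b
  show {x | ∑ i ∈ Finset.range 3, (x + i • a) ^ (3 ^ t + 4) = b}.ncard ≤ 3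
  rcases Set.eq_empty_or_nonempty {x | ∑ i ∈ Finset.range 3, (x + i • a) ^ (3 ^ t + 4) = b}
    with h | ⟨x₀, hx₀⟩
  · rw [h, Set.ncard_empty]; norm_num
  calc _ ≤ ({x₀, x₀ + a, x₀ - a} : Set F).ncard := Set.ncard_le_ncard ?_ (Set.toFinite _)
    _ ≤ 3 := by
        rw [← Finset.coe_pair, ← Finset.coe_insert, Set.ncard_coe_finset]
        exact Finset.card_le_three
  intro x hx
  obtain ⟨z, rfl⟩ : ∃ z, x = x₀ + a * z := ⟨(x - x₀) / a, by field_simp; ring⟩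
  have hroot : z ^ 3 ^ t + z ^ 3 + z = 0 := by
    have hdiff := sum_range_three_pow_three_pow_add_four_add_mul t x₀ a z
    rw [hx, hx₀] at hdiff
    have : a ^ (3 ^ t + 4) * (z ^ 3 ^ t + z ^ 3 + z) = 0 := by linear_combination hdiff
    exact (mul_eq_zero.mp this).resolve_left (pow_ne_zero _ ha)
  rcases eq_zero_or_eq_one_or_eq_neg_one_of_pow_three_eq_self (hroots z hroot)
    with rfl | rfl | rfl <;> simp [sub_eq_add_neg]

end CharThreeField

lemma GaloisField.pow_pow_eq_self (p n : ℕ) [Fact p.Prime] (z : GaloisField p n) :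
    z ^ p ^ n = z := by
  rcases eq_or_ne n 0 with rfl | hn
  · simp
  · have := Fintype.ofFinite (GaloisField p n)
    rw [← GaloisField.card p n hn, Nat.card_eq_fintype_card, FiniteField.pow_card]

theorem stmt_9_general (n t : ℕ)
    (ht : t = if Odd n then (n - 1) / 2 else n / 2) :
    IsGAPN 3 (fun x : GaloisField 3 n => x ^ (3 ^ t + 4)) := by
  have : Fact (Nat.Prime 3) := ⟨Nat.prime_three⟩
  have hnt : n = 2 * t ∨ n = 2 * t + 1 := by
    split_ifs at ht with h
    · obtain ⟨k, rfl⟩ := h; omega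
    · obtain ⟨k, rfl⟩ := Nat.not_odd_iff_even.mp h; omega
  exact isGAPN_pow_three_pow_add_four fun z ↦
    pow_three_eq_self_of_root hnt (GaloisField.pow_pow_eq_self 3 n z)

theorem stmt_9 (n t : ℕ) (hn : 2 ≤ n)
    (ht : t = if Odd n then (n - 1) / 2 else n / 2) :
    IsGAPN 3 (fun x : GaloisField 3 n => x ^ (3 ^ t + 4)) :=
  stmt_9_general n t ht
end

section
/- Let p be an odd prime and n ≥ 1. The inverse permutation f : 𝔽_{p^n} → 𝔽_{p^n}, f(x) = x^{p^n − 2}, is a GAPN function: for all a ∈ 𝔽_{p^n}ˣ and b ∈ 𝔽_{p^n}, #{x ∈ 𝔽_{p^n} : ∑_{i=0}^{p−1} f(x + i·a) = b} ≤ p. -/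
/-!
Over `𝔽_p` we have `∏_{z ∈ 𝔽_p} (X - z) = X^p - X`, whose derivative is `-1`; logarithmic
differentiation gives `∑_i (t + i)⁻¹ = -(t^p - t)⁻¹` whenever `t ∉ 𝔽_p`. For `t ∈ 𝔽_p` both
sides vanish, because `∑_{z ∈ 𝔽_p} z⁻¹ = ∑_{z ∈ 𝔽_p} z = 0` for odd `p` and `0⁻¹ = 0`.
Scaling by `a`, `∑_{i < p} (x + i a)⁻¹ = -a^(p-1) / L(x)` with `L(x) = x^p - a^(p-1) x`,
so the equation `D̃_a f(x) = b` says `L(x) = -a^(p-1) / b`, a polynomial equation of degree `p`.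
-/

open Polynomial Finset

namespace FiniteField

variable {F : Type*} [Field F] [Fintype F]

theorem prod_X_sub_C_eq_X_pow_card_sub_X :
    ∏ c : F, (X - C c) = X ^ Fintype.card F - X := by
  have hmonic : (X ^ Fintype.card F - X : F[X]).Monic :=
    monic_X_pow_sub (by rw [degree_X]; exact_mod_cast Fintype.one_lt_card)
  have := prod_multiset_X_sub_C_of_monic_of_roots_card_eq hmonic
    (by rw [roots_X_pow_card_sub_X, X_pow_card_sub_X_natDegree_eq F Fintype.one_lt_card]; rfl)
  rwa [roots_X_pow_card_sub_X] at this

theorem sum_inv_eq_zero (h : 2 < Fintype.card F) : ∑ c : F, c⁻¹ = 0 := by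
  rw [Fintype.sum_equiv (Equiv.inv F) (·⁻¹) id fun _ => rfl]
  simpa using sum_pow_lt_card_sub_one (K := F) 1 (by omega)

theorem pow_card_sub_two_eq_inv {K : Type*} [Field K] [Finite K]
    (h : 2 < Nat.card K) (x : K) : x ^ (Nat.card K - 2) = x⁻¹ := by
  have := Fintype.ofFinite K
  rw [Nat.card_eq_fintype_card] at h ⊢
  rcases eq_or_ne x 0 with rfl | hx
  · rw [zero_pow (by omega), inv_zero]
  · refine eq_inv_of_mul_eq_one_left ?_
    rw [← pow_succ, show Fintype.card K - 2 + 1 = Fintype.card K - 1 by omega]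
    exact pow_card_sub_one_eq_one x hx

end FiniteField

theorem ZMod.sum_range_natCast_eq_sum {M : Type*} [AddCommMonoid M] (p : ℕ) [NeZero p]
    (f : ZMod p → M) : ∑ i ∈ range p, f i = ∑ z : ZMod p, f z :=
  sum_nbij' (fun i => i) ZMod.val (fun _ _ => mem_univ _) (fun z _ => mem_range.2 z.val_lt)
    (fun _ hi => ZMod.val_cast_of_lt (mem_range.1 hi)) (fun z _ => ZMod.natCast_zmod_val z)
    fun _ _ => rfl

theorem Polynomial.eval_derivative_prod_X_sub_C {K ι : Type*} [Field K] (s : Finset ι)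
    (f : ι → K) {x : K} (hx : ∀ i ∈ s, x ≠ f i) :
    (derivative (∏ i ∈ s, (X - C (f i)))).eval x =
      (∏ i ∈ s, (x - f i)) * ∑ i ∈ s, (x - f i)⁻¹ := by
  classical
  rw [derivative_prod_finset, eval_finsetSum, mul_sum]
  refine sum_congr rfl fun i hi => ?_
  rw [← mul_prod_erase s _ hi, mul_comm (x - f i),
    mul_inv_cancel_right₀ (sub_ne_zero.2 (hx i hi))]
  simp [eval_prod]

theorem Polynomial.ncard_setOf_eval_eq_le {R : Type*} [CommRing R] [IsDomain R] {q : R[X]}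
    (hq : 0 < q.natDegree) (c : R) : {x | q.eval x = c}.ncard ≤ q.natDegree := by
  classical
  have hne : q - C c ≠ 0 := fun h => by simp [sub_eq_zero.1 h] at hq
  have hsub : {x | q.eval x = c} = ((q - C c).roots.toFinset : Set R) := by
    ext x
    simp [mem_roots hne, sub_eq_zero]
  rw [hsub, Set.ncard_coe_finset]
  exact (Multiset.toFinset_card_le _).trans
    (card_roots_sub_C' (natDegree_pos_iff_degree_pos.1 hq))

section CharP

variable {p : ℕ} [Fact p.Prime] {K : Type*} [Field K] [CharP K p]

theorem prod_zmod_X_sub_C_cast : ∏ z : ZMod p, (X - C (z.cast : K)) = X ^ p - X := by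
  simpa [Polynomial.map_prod, ZMod.card] using congrArg (map (ZMod.castHom (dvd_refl p) K))
    (FiniteField.prod_X_sub_C_eq_X_pow_card_sub_X (F := ZMod p))

theorem sum_zmod_inv_sub_cast (hp : p ≠ 2) (t : K) :
    ∑ z : ZMod p, (t - z.cast)⁻¹ = -(t ^ p - t)⁻¹ := by
  by_cases ht : ∀ z : ZMod p, t ≠ z.cast
  · have hder := eval_derivative_prod_X_sub_C univ (fun z : ZMod p => (z.cast : K)) fun z _ => ht z
    rw [prod_zmod_X_sub_C_cast] at hder
    simp only [derivative_sub, derivative_X_pow, CharP.cast_eq_zero, C_0, zero_mul,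
      derivative_X, zero_sub, eval_neg, eval_one] at hder
    have hprod : ∏ z : ZMod p, (t - z.cast) = t ^ p - t := by
      simpa [eval_prod] using congrArg (eval t) (prod_zmod_X_sub_C_cast (p := p) (K := K))
    rw [hprod] at hder
    have hu : t ^ p - t ≠ 0 := by rintro h; simp [h] at hder
    rw [← one_div, ← neg_div]
    exact eq_div_of_mul_eq hu (by rw [mul_comm, ← hder])
  · push Not at ht
    obtain ⟨w, rfl⟩ := ht
    have h2p : 2 < Fintype.card (ZMod p) := by
      have := (Fact.out : p.Prime).two_le
      rw [ZMod.card]; omega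
    have hsum : ∑ z : ZMod p, (w - z)⁻¹ = 0 := by
      rw [Fintype.sum_equiv (Equiv.subLeft w) (fun z => (w - z)⁻¹) (·⁻¹) fun _ => rfl]
      exact FiniteField.sum_inv_eq_zero h2p
    rw [← ZMod.cast_pow', ZMod.pow_card, sub_self, inv_zero, neg_zero]
    simpa [map_sum, map_inv₀, map_sub] using congrArg (ZMod.castHom (dvd_refl p) K) hsum

theorem sum_range_inv_add_natCast (hp : p ≠ 2) (t : K) :
    ∑ i ∈ range p, (t + i)⁻¹ = -(t ^ p - t)⁻¹ := by
  have : NeZero p := ⟨(Fact.out : p.Prime).ne_zero⟩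
  rw [← sum_zmod_inv_sub_cast hp t, ← Fintype.sum_equiv (Equiv.neg (ZMod p))
    (fun z => (t + z.cast)⁻¹) _ fun z => by simp [sub_eq_add_neg],
    ← ZMod.sum_range_natCast_eq_sum p fun z => (t + z.cast)⁻¹]
  simp [ZMod.cast_natCast]

theorem sum_range_inv_add_natCast_mul (hp : p ≠ 2) (a x : K) :
    ∑ i ∈ range p, (x + i * a)⁻¹ = -a ^ (p - 1) * (x ^ p - a ^ (p - 1) * x)⁻¹ := by
  have hp1 : 1 < p := (Fact.out : p.Prime).one_lt
  rcases eq_or_ne a 0 with rfl | ha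
  · simp [zero_pow (Nat.sub_ne_zero_of_lt hp1)]
  have hx : ∀ i : ℕ, x + i * a = a * (x / a + i) := fun i => by field_simp
  have hpa : a ^ p = a ^ (p - 1) * a := (pow_sub_one_mul (by omega) a).symm
  have hL : x ^ p - a ^ (p - 1) * x = a ^ (p - 1) * a * ((x / a) ^ p - x / a) := by
    rw [div_pow, ← hpa]
    field_simp
    rw [hpa]
    ring
  simp_rw [hx, mul_inv, ← mul_sum, sum_range_inv_add_natCast hp, hL, mul_inv]
  field_simp

end CharP

theorem stmt_13 (p n : ℕ) [Fact p.Prime] (hp : Odd p) (hn : 0 < n) :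
    ∀ a : GaloisField p n, a ≠ 0 → ∀ b : GaloisField p n,
      {x : GaloisField p n |
        ∑ i ∈ Finset.range p, (x + i • a) ^ (p ^ n - 2) = b}.ncard ≤ p := by
  intro a ha b
  have hp2 : p ≠ 2 := by rintro rfl; exact absurd hp (by decide)
  have hp1 : 1 < p := (Fact.out : p.Prime).one_lt
  have hcard : Nat.card (GaloisField p n) = p ^ n := GaloisField.card p n hn.ne'
  have hinv : ∀ x : GaloisField p n, x ^ (p ^ n - 2) = x⁻¹ := by
    rw [← hcard]
    refine FiniteField.pow_card_sub_two_eq_inv ?_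
    have := Nat.le_self_pow hn.ne' p
    omega
  set L : (GaloisField p n)[X] := X ^ p - C (a ^ (p - 1)) * X
  have hL : L.natDegree = p := by
    rw [natDegree_sub_eq_left_of_natDegree_lt] <;> rw [natDegree_X_pow]
    rwa [natDegree_C_mul_X _ (pow_ne_zero _ ha)]
  have hset : {x : GaloisField p n | ∑ i ∈ range p, (x + i • a) ^ (p ^ n - 2) = b}
      = {x | L.eval x = -a ^ (p - 1) / b} := by
    ext x
    simp only [Set.mem_ofPred_eq, nsmul_eq_mul, hinv]
    have hc : -a ^ (p - 1) ≠ 0 := neg_ne_zero.2 (pow_ne_zero _ ha)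
    rw [sum_range_inv_add_natCast_mul hp2, ← inv_div, ← inv_eq_iff_eq_inv, eq_div_iff hc,
      mul_comm]
    simp [L]
  rw [hset]
  exact (ncard_setOf_eval_eq_le (by omega) _).trans hL.le
end

section
/- Let p be a prime, and let d, d' be exponents with d = p^k · d' and d < p^n. Then f_d(x) = x^d on 𝔽_{p^n} is a GAPN function if and only if f_{d'}(x) = x^{d'} is a GAPN function on 𝔽_{p^n}. -/
open scoped BigOperators

lemma gapn_comp (p : ℕ) {F : Type*} [Field F] (φ : F ≃+* F) (g : F → F) :
    IsGAPN p (fun x => φ (g x)) ↔ IsGAPN p g := by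
  have hset : ∀ a : F, ∀ b : F,
      {x : F | ∑ i ∈ Finset.range p, φ (g (x + i • a)) = b} =
      {x : F | ∑ i ∈ Finset.range p, g (x + i • a) = φ.symm b} := by
    intro a b
    ext x
    simp only [Set.mem_setOf_eq, ← map_sum]
    constructor
    · intro h; rw [← h]; simp
    · intro h; rw [h]; simp
  constructor
  · intro h a ha b
    have := h a ha (φ b)
    simp only [hset a (φ b), RingEquiv.symm_apply_apply] at this
    exact this
  · intro h a ha b
    rw [show {x : F | ∑ i ∈ Finset.range p, (fun x => φ (g x)) (x + i • a) = b} =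
        {x : F | ∑ i ∈ Finset.range p, g (x + i • a) = φ.symm b} from hset a b]
    exact h a ha _

theorem stmt_14 (p n k d d' : ℕ) [Fact p.Prime] (hn : 0 < n)
    (hd : d = p ^ k * d') (hdn : d < p ^ n) :
    IsGAPN p (fun x : GaloisField p n => x ^ d) ↔
      IsGAPN p (fun x : GaloisField p n => x ^ d') := by
  have hfun : (fun x : GaloisField p n => x ^ d) =
      fun x : GaloisField p n => (iterateFrobeniusEquiv (GaloisField p n) p k) (x ^ d') := by
    funext x
    rw [iterateFrobeniusEquiv_apply, iterateFrobenius_def, ← pow_mul, hd, mul_comm]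
  rw [hfun]
  exact gapn_comp p (iterateFrobeniusEquiv (GaloisField p n) p k) (fun x => x ^ d')
end

section
/- Let p be an odd prime, n a positive integer, and i a positive integer with gcd(i, n) = 1. Then the generalized Gold function f : 𝔽_{p^n} → 𝔽_{p^n}, f(x) = x^{p^i + p − 1}, is a GAPN function. -/
open scoped BigOperators

open Finset Polynomial

section
variable {p : ℕ} [Fact p.Prime] {F : Type*} [Field F] [CharP F p]

omit [CharP F p] in
lemma sum_zmod_eq_sum_range (g : ZMod p → F) :
    ∑ x : ZMod p, g x = ∑ j ∈ Finset.range p, g j := by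
  haveI : NeZero p := ⟨(Fact.out : p.Prime).ne_zero⟩
  rw [← Fin.sum_univ_eq_sum_range (fun j => g j) p]
  refine (Fintype.sum_bijective (fun i : Fin p => ((i : ℕ) : ZMod p)) ⟨?_, ?_⟩ _ _ fun i => rfl).symm
  · intro i j h
    have := congrArg ZMod.val h
    rwa [ZMod.val_cast_of_lt i.isLt, ZMod.val_cast_of_lt j.isLt, ← Fin.ext_iff] at this
  · intro x
    exact ⟨⟨x.val, x.val_lt⟩, by simp⟩

lemma T_big (m : ℕ) : ∑ j ∈ Finset.range p, ((j : F)) ^ m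
    = ZMod.castHom (dvd_refl p) F (∑ x : ZMod p, x ^ m) := by
  rw [map_sum, sum_zmod_eq_sum_range (fun x : ZMod p => ZMod.castHom (dvd_refl p) F (x ^ m))]
  exact Finset.sum_congr rfl fun j _ => by rw [map_pow, map_natCast]

lemma T_lt (m : ℕ) (hm : m < p - 1) : ∑ j ∈ Finset.range p, ((j : F)) ^ m = 0 := by
  rw [T_big, FiniteField.sum_pow_lt_card_sub_one (ZMod p) m (by rwa [ZMod.card]), map_zero]

lemma T_eq : ∑ j ∈ Finset.range p, ((j : F)) ^ (p - 1) = -1 := by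
  have h2 : 2 ≤ p := (Fact.out : p.Prime).two_le
  have : ∑ x : ZMod p, x ^ (p - 1) = -1 := by
    classical
    calc ∑ x : ZMod p, x ^ (p - 1)
        = ∑ x : ZMod p, if x = 0 then 0 else 1 := by
          refine Finset.sum_congr rfl fun x _ => ?_
          split_ifs with h
          · simp [h, zero_pow (by omega : p - 1 ≠ 0)]
          · exact ZMod.pow_card_sub_one_eq_one h
      _ = ((Finset.univ.filter (fun x : ZMod p => ¬ x = 0)).card : ZMod p) := by
          rw [Finset.sum_ite, Finset.sum_const, Finset.sum_const]; simp
      _ = -1 := by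
          rw [Finset.filter_not, Finset.card_sdiff_of_subset (Finset.subset_univ _),
            (by simp [Finset.filter_eq'] : (Finset.univ.filter (fun x : ZMod p => x = 0)) = {0})]
          simp only [Finset.card_singleton, Finset.card_univ, ZMod.card]
          rw [Nat.cast_sub (by omega : 1 ≤ p), ZMod.natCast_self, Nat.cast_one, zero_sub]
  rw [T_big, this, map_neg, map_one]

lemma cast_pow_p (j m : ℕ) : ((j : F)) ^ (p ^ m) = (j : F) := by
  have : ((j : F)) = ZMod.castHom (dvd_refl p) F ((j : ZMod p)) := (map_natCast _ j).symm
  rw [this, ← map_pow, ZMod.pow_card_pow]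

lemma sumA (x a : F) : ∑ j ∈ Finset.range p, (x + (j : F) * a) ^ (p - 1) = -a ^ (p - 1) := by
  have h2 : 2 ≤ p := (Fact.out : p.Prime).two_le
  have hP : p - 1 + 1 = p := by omega
  calc ∑ j ∈ range p, (x + (j : F) * a) ^ (p - 1)
      = ∑ j ∈ range p, ∑ k ∈ range p,
          x ^ k * a ^ (p - 1 - k) * ((p - 1).choose k : F) * ((j : F)) ^ (p - 1 - k) := by
        refine Finset.sum_congr rfl fun j _ => ?_
        rw [add_pow, hP]
        exact Finset.sum_congr rfl fun k _ => by rw [mul_pow]; ring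
    _ = ∑ k ∈ range p,
          x ^ k * a ^ (p - 1 - k) * ((p - 1).choose k : F) * ∑ j ∈ range p, ((j : F)) ^ (p - 1 - k) := by
        rw [Finset.sum_comm]
        exact Finset.sum_congr rfl fun k _ => (Finset.mul_sum _ _ _).symm
    _ = -a ^ (p - 1) := by
        rw [Finset.sum_eq_single 0]
        · rw [Nat.sub_zero, T_eq, pow_zero, Nat.choose_zero_right, Nat.cast_one]; ring
        · intro k hk hk0
          rw [T_lt _ (by simp at hk; omega), mul_zero]
        · intro h; exact absurd (Finset.mem_range.2 (by omega)) h

lemma sumB (hp3 : 3 ≤ p) (x a : F) :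
    ∑ j ∈ Finset.range p, (j : F) * (x + (j : F) * a) ^ (p - 1) = a ^ (p - 2) * x := by
  have hP : p - 1 + 1 = p := by omega
  calc ∑ j ∈ range p, (j : F) * (x + (j : F) * a) ^ (p - 1)
      = ∑ j ∈ range p, ∑ k ∈ range p,
          x ^ k * a ^ (p - 1 - k) * ((p - 1).choose k : F) * ((j : F)) ^ (p - 1 - k + 1) := by
        refine Finset.sum_congr rfl fun j _ => ?_
        rw [add_pow, hP, Finset.mul_sum]
        exact Finset.sum_congr rfl fun k _ => by rw [mul_pow, pow_succ]; ring
    _ = ∑ k ∈ range p,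
          x ^ k * a ^ (p - 1 - k) * ((p - 1).choose k : F) * ∑ j ∈ range p, ((j : F)) ^ (p - 1 - k + 1) := by
        rw [Finset.sum_comm]
        exact Finset.sum_congr rfl fun k _ => (Finset.mul_sum _ _ _).symm
    _ = a ^ (p - 2) * x := by
        rw [Finset.sum_eq_single 1]
        · have e1 : p - 1 - 1 + 1 = p - 1 := by omega
          have e2 : ((p - 1 : ℕ) : F) = -1 := by
            rw [Nat.cast_sub (by omega : 1 ≤ p), CharP.cast_eq_zero F p, Nat.cast_one, zero_sub]
          have e3 : p - 1 - 1 = p - 2 := by omega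
          rw [e1, T_eq, Nat.choose_one_right, e2, pow_one, e3]; ring
        · intro k hk hk1
          rcases Nat.eq_zero_or_pos k with rfl | hk0
          · have h1 : p - 1 - 0 + 1 = p ^ 1 := by simp; omega
            have h0 : ∑ j ∈ Finset.range p, ((j : F)) ^ p ^ 1 = 0 := by
              simp_rw [cast_pow_p]
              simpa using T_lt (F := F) 1 (by omega)
            rw [h1, h0, mul_zero]
          · rw [T_lt _ (by simp at hk; omega), mul_zero]
        · intro h; exact absurd (Finset.mem_range.2 (by omega)) h

lemma key_sum (hp3 : 3 ≤ p) (i : ℕ) (a x : F) :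
    ∑ j ∈ Finset.range p, (x + j • a) ^ (p ^ i + p - 1)
      = a ^ (p ^ i + p - 2) * x - a ^ (p - 1) * x ^ (p ^ i) := by
  have hpe : 1 ≤ p ^ i := Nat.one_le_pow _ _ (by omega)
  have hsplit : p ^ i + p - 1 = p ^ i + (p - 1) := by omega
  calc ∑ j ∈ range p, (x + j • a) ^ (p ^ i + p - 1)
      = ∑ j ∈ range p, (x ^ (p ^ i) * (x + (j : F) * a) ^ (p - 1)
          + a ^ (p ^ i) * ((j : F) * (x + (j : F) * a) ^ (p - 1))) := by
        refine Finset.sum_congr rfl fun j _ => ?_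
        rw [nsmul_eq_mul, hsplit, pow_add, add_pow_char_pow, mul_pow, cast_pow_p]
        ring
    _ = x ^ (p ^ i) * ∑ j ∈ range p, (x + (j : F) * a) ^ (p - 1)
          + a ^ (p ^ i) * ∑ j ∈ range p, (j : F) * (x + (j : F) * a) ^ (p - 1) := by
        rw [Finset.sum_add_distrib, ← Finset.mul_sum, ← Finset.mul_sum]
    _ = a ^ (p ^ i + p - 2) * x - a ^ (p - 1) * x ^ (p ^ i) := by
        rw [sumA, sumB hp3]
        have : a ^ (p ^ i + p - 2) = a ^ (p ^ i) * a ^ (p - 2) := by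
          rw [← pow_add]; congr 1; omega
        rw [this]; ring

end

lemma ord_aux {F : Type*} [Field F] {u : F} (hu : u ≠ 0) {p i n : ℕ} (hp : 1 < p)
    (hi : 0 < i) (hn : 0 < n) (hgcd : Nat.gcd i n = 1)
    (h1 : u ^ p ^ i = u) (h2 : u ^ p ^ n = u) : u ^ p = u := by
  have hpi : 1 < p ^ i := Nat.one_lt_pow hi.ne' hp
  have hpn : 1 < p ^ n := Nat.one_lt_pow hn.ne' hp
  have e1 : u ^ (p ^ i - 1) = 1 := by
    have : u ^ (p ^ i - 1) * u = 1 * u := by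
      rw [one_mul, ← pow_succ, Nat.sub_add_cancel (by omega)]
      exact h1
    exact mul_right_cancel₀ hu this
  have e2 : u ^ (p ^ n - 1) = 1 := by
    have : u ^ (p ^ n - 1) * u = 1 * u := by
      rw [one_mul, ← pow_succ, Nat.sub_add_cancel (by omega)]
      exact h2
    exact mul_right_cancel₀ hu this
  have hfin : IsOfFinOrder u := isOfFinOrder_iff_pow_eq_one.2 ⟨p ^ i - 1, by omega, e1⟩
  set d := orderOf u with hd
  have hdpos : 0 < d := hfin.orderOf_pos
  haveI : NeZero d := ⟨hdpos.ne'⟩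
  have hd1 : d ∣ p ^ i - 1 := orderOf_dvd_of_pow_eq_one e1
  have hd2 : d ∣ p ^ n - 1 := orderOf_dvd_of_pow_eq_one e2
  -- show (p : ZMod d) ^ i = 1 and ^ n = 1
  have key : ∀ m : ℕ, 0 < m → d ∣ p ^ m - 1 → ((p : ZMod d)) ^ m = 1 := by
    intro m hm hdvd
    have : ((p ^ m - 1 : ℕ) : ZMod d) = 0 := (ZMod.natCast_eq_zero_iff _ _).2 hdvd
    have h1m : 1 ≤ p ^ m := Nat.one_le_pow _ _ (by omega)
    have hcast : ((p ^ m : ℕ) : ZMod d) = ((p ^ m - 1 : ℕ) : ZMod d) + 1 := by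
      rw [← Nat.cast_one (R := ZMod d), ← Nat.cast_add]
      congr 1
      omega
    rw [this, zero_add] at hcast
    rw [Nat.cast_pow] at hcast
    exact hcast
  have hx1 : ((p : ZMod d)) ^ i = 1 := key i hi hd1
  have hx2 : ((p : ZMod d)) ^ n = 1 := key n hn hd2
  have ho : orderOf ((p : ZMod d)) ∣ Nat.gcd i n :=
    Nat.dvd_gcd (orderOf_dvd_of_pow_eq_one hx1) (orderOf_dvd_of_pow_eq_one hx2)
  rw [hgcd, Nat.dvd_one] at ho
  have hp1 : (p : ZMod d) = 1 := orderOf_eq_one_iff.1 ho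
  have hdp : d ∣ p - 1 := by
    rw [← ZMod.natCast_eq_zero_iff]
    rw [Nat.cast_sub (by omega : 1 ≤ p), hp1, Nat.cast_one, sub_self]
  have : u ^ (p - 1) = 1 := orderOf_dvd_iff_pow_eq_one.1 hdp
  calc u ^ p = u ^ (p - 1) * u := by rw [← pow_succ, Nat.sub_add_cancel (by omega)]
  _ = u := by rw [this, one_mul]

theorem stmt_18 (p n i : ℕ) [Fact p.Prime] (hp : Odd p) (hn : 0 < n)
    (hi : 0 < i) (hgcd : Nat.gcd i n = 1) :
    IsGAPN p (fun x : GaloisField p n => x ^ (p ^ i + p - 1)) := by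
  classical
  have hprime : p.Prime := Fact.out
  have hp3 : 3 ≤ p := by
    rcases Nat.lt_or_ge p 3 with h | h
    · interval_cases p
      · exact absurd hprime (by norm_num)
      · exact absurd hprime (by norm_num)
      · exact absurd hp (by norm_num)
    · exact h
  intro a ha b
  show ({x : GaloisField p n | ∑ j ∈ Finset.range p, (x + j • a) ^ (p ^ i + p - 1) = b}).ncard ≤ p
  haveI : Fintype (GaloisField p n) := Fintype.ofFinite _
  have hcard : Fintype.card (GaloisField p n) = p ^ n := by
    rw [← Nat.card_eq_fintype_card]; exact GaloisField.card p n hn.ne'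
  set S := {x : GaloisField p n | ∑ j ∈ Finset.range p, (x + j • a) ^ (p ^ i + p - 1) = b} with hS
  rcases Set.eq_empty_or_nonempty S with h | ⟨x₀, hx₀⟩
  · rw [h]; simp
  have hx₀' : ∑ j ∈ Finset.range p, (x₀ + j • a) ^ (p ^ i + p - 1) = b := hx₀
  set R := {u : GaloisField p n | u ^ p = u} with hR
  have hRcard : R.ncard ≤ p := by
    have hsub : R ⊆ ↑((X ^ p - X : (GaloisField p n)[X]).roots.toFinset) := by
      intro u hu
      simp only [hR, Set.mem_setOf_eq] at hu
      simp only [Finset.coe_sort_coe, Multiset.mem_toFinset, Finset.mem_coe]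
      rw [mem_roots (FiniteField.X_pow_card_sub_X_ne_zero (GaloisField p n) (by omega))]
      simp [IsRoot, hu]
    calc R.ncard ≤ (((X ^ p - X : (GaloisField p n)[X]).roots.toFinset : Finset (GaloisField p n)) : Set (GaloisField p n)).ncard :=
          Set.ncard_le_ncard hsub (Set.toFinite _)
      _ = (X ^ p - X : (GaloisField p n)[X]).roots.toFinset.card := Set.ncard_coe_finset _
      _ ≤ Multiset.card (X ^ p - X : (GaloisField p n)[X]).roots := Multiset.toFinset_card_le _
      _ ≤ (X ^ p - X : (GaloisField p n)[X]).natDegree := Polynomial.card_roots' _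
      _ = p := FiniteField.X_pow_card_sub_X_natDegree_eq (GaloisField p n) (by omega)
  have hsub : S ⊆ (fun u => x₀ + a * u) '' R := by
    intro x hx
    have hx' : ∑ j ∈ Finset.range p, (x + j • a) ^ (p ^ i + p - 1) = b := hx
    rw [key_sum hp3 i a] at hx' hx₀'
    set y := x - x₀ with hy
    refine ⟨a⁻¹ * y, ?_, by show x₀ + a * (a⁻¹ * y) = x; rw [mul_inv_cancel_left₀ ha, hy]; ring⟩
    show (a⁻¹ * y) ^ p = a⁻¹ * y
    by_cases hy0 : y = 0
    · simp [hy0, zero_pow hprime.ne_zero]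
    have heq : a ^ (p ^ i + p - 2) * y = a ^ (p - 1) * y ^ (p ^ i) := by
      have h := hx'.trans hx₀'.symm
      have hpow : (x - x₀) ^ (p ^ i) = x ^ (p ^ i) - x₀ ^ (p ^ i) := by
        rw [sub_pow_char_pow]
      rw [hy, hpow]
      linear_combination h
    have he1 : 1 ≤ p ^ i := Nat.one_le_pow _ _ (by omega)
    have hye : y ^ (p ^ i) = a ^ (p ^ i - 1) * y := by
      apply mul_left_cancel₀ (pow_ne_zero (p - 1) ha)
      rw [← heq, ← mul_assoc, ← pow_add]
      congr 2
      omega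
    have hu0 : a⁻¹ * y ≠ 0 := mul_ne_zero (inv_ne_zero ha) hy0
    have hu1 : (a⁻¹ * y) ^ (p ^ i) = a⁻¹ * y := by
      have hae : a ^ (p ^ i) = a ^ (p ^ i - 1) * a := by
        rw [← pow_succ]; congr 1; omega
      rw [mul_pow, hye, inv_pow, hae, mul_inv_rev, mul_assoc,
        inv_mul_cancel_left₀ (pow_ne_zero _ ha)]
    have hu2 : (a⁻¹ * y) ^ (p ^ n) = a⁻¹ * y := by
      have := FiniteField.pow_card (a⁻¹ * y)
      rwa [hcard] at this
    exact ord_aux hu0 (by omega) hi hn hgcd hu1 hu2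
  calc S.ncard ≤ ((fun u => x₀ + a * u) '' R).ncard :=
        Set.ncard_le_ncard hsub (Set.toFinite _)
    _ ≤ R.ncard := Set.ncard_image_le (Set.toFinite _)
    _ ≤ p := hRcard
end
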